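/- arXiv:1207.0487 — 2 statements merged into one kernel-verified Lean document; each statement's English description precedes it below -/
import Mathlib

section
/- Let c ≥ 1 be a real number and n a nonnegative integer. For the monic Jacobi polynomial p_n^{(α,β)}(x) = (2^n (α+1)_n / (n+α+β+1)_n) · Σ_{l=0}^n [(n+α+β+1)_l / (α+1)_l] · C(n,l) · ((x−1)/2)^l, one has, for every fixed x ∈ [−1,1], the limit lim p_n^{(α,β)}(x) = (x + (c−1)/(c+1))^n as α → ∞ with α/β → c. -/
/-!
Write `ρ = 1 + c⁻¹`, the limit of `(α + β)/α`. Every Pochhammer ratio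
`(α + β + a)_k / (α + b)_k` is a product of `k` factors `(α + β + a + j)/(α + b + j)`, each tending
to `ρ`, so it tends to `ρ ^ k`. Passing to the limit termwise, the explicit formula becomes
`2 ^ n ρ⁻ⁿ ∑ ρ ^ l C(n, l) ((x - 1)/2) ^ l = (x - 1 + 2/ρ) ^ n` by the binomial theorem, and
`2/ρ = 2c/(c + 1)`.
-/

open Filter Topology

noncomputable def monicJacobi (n : ℕ) (α β x : ℝ) : ℝ :=
  (2 ^ n * (ascPochhammer ℝ n).eval (α + 1) / (ascPochhammer ℝ n).eval (n + α + β + 1)) *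
    ∑ l ∈ Finset.range (n + 1),
      ((ascPochhammer ℝ l).eval (n + α + β + 1) / (ascPochhammer ℝ l).eval (α + 1)) *
        (n.choose l : ℝ) * ((x - 1) / 2) ^ l

section Asymptotics

variable {ι : Type*} {l : Filter ι} {f g : ι → ℝ} {r : ℝ}

lemma tendsto_add_add_div_add (hf : Tendsto f l atTop) (hg : Tendsto (fun i ↦ g i / f i) l (𝓝 r))
    (a b : ℝ) : Tendsto (fun i ↦ (f i + g i + a) / (f i + b)) l (𝓝 (1 + r)) := by
  have h₀ {c : ℝ} : Tendsto (fun i ↦ c / f i) l (𝓝 0) := tendsto_const_nhds.div_atTop hf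
  have hlim : Tendsto (fun i ↦ (1 + g i / f i + a / f i) / (1 + b / f i)) l (𝓝 (1 + r)) := by
    rw [show 1 + r = (1 + r + 0) / (1 + 0) by simp]
    exact ((tendsto_const_nhds.add hg).add h₀).div (tendsto_const_nhds.add h₀) (by simp)
  refine hlim.congr' ?_
  filter_upwards [hf.eventually_ne_atTop 0] with i hi
  field_simp

lemma tendsto_ascPochhammer_eval_div (hf : Tendsto f l atTop)
    (hg : Tendsto (fun i ↦ g i / f i) l (𝓝 r)) (a b : ℝ) (k : ℕ) :
    Tendsto (fun i ↦ (ascPochhammer ℝ k).eval (f i + g i + a) / (ascPochhammer ℝ k).eval (f i + b))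
      l (𝓝 ((1 + r) ^ k)) := by
  induction k with
  | zero => simpa using tendsto_const_nhds
  | succ k ih =>
    simp only [ascPochhammer_succ_eval, mul_div_mul_comm, pow_succ]
    simpa only [add_assoc] using ih.mul (tendsto_add_add_div_add hf hg (a + k) (b + k))

end Asymptotics

lemma two_pow_mul_inv_pow_mul_sum_choose {ρ : ℝ} (hρ : ρ ≠ 0) (n : ℕ) (x : ℝ) :
    2 ^ n * (ρ ^ n)⁻¹ * ∑ l ∈ Finset.range (n + 1), ρ ^ l * (n.choose l : ℝ) * ((x - 1) / 2) ^ l =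
      (x - 1 + 2 / ρ) ^ n := by
  have hbinom : ∑ l ∈ Finset.range (n + 1), ρ ^ l * (n.choose l : ℝ) * ((x - 1) / 2) ^ l =
      (ρ * ((x - 1) / 2) + 1) ^ n := by
    rw [add_pow]
    refine Finset.sum_congr rfl fun l _ ↦ ?_
    rw [one_pow, mul_pow]
    ring
  rw [hbinom, ← inv_pow, ← mul_pow, ← mul_pow]
  congr 1
  field_simp

lemma tendsto_monicJacobi {ι : Type*} {l : Filter ι} {α β : ι → ℝ} {r : ℝ} (n : ℕ) (x : ℝ)
    (hα : Tendsto α l atTop) (hβ : Tendsto (fun i ↦ β i / α i) l (𝓝 r)) (hr : 1 + r ≠ 0) :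
    Tendsto (fun i ↦ monicJacobi n (α i) (β i) x) l (𝓝 ((x - 1 + 2 / (1 + r)) ^ n)) := by
  have hratio (k : ℕ) : Tendsto (fun i ↦ (ascPochhammer ℝ k).eval (n + α i + β i + 1) /
      (ascPochhammer ℝ k).eval (α i + 1)) l (𝓝 ((1 + r) ^ k)) := by
    simpa only [show ∀ i, α i + β i + (n + 1) = n + α i + β i + 1 from fun i ↦ by ring] using
      tendsto_ascPochhammer_eval_div hα hβ (n + 1) 1 k
  have hprefactor : Tendsto (fun i ↦ 2 ^ n * (ascPochhammer ℝ n).eval (α i + 1) /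
      (ascPochhammer ℝ n).eval (n + α i + β i + 1)) l (𝓝 (2 ^ n * ((1 + r) ^ n)⁻¹)) :=
    (tendsto_const_nhds.mul ((hratio n).inv₀ (pow_ne_zero n hr))).congr fun i ↦ by
      rw [inv_div, mul_div_assoc]
  have hsum := tendsto_finsetSum (Finset.range (n + 1)) fun k _ ↦
    ((hratio k).mul_const (n.choose k : ℝ)).mul_const (((x - 1) / 2) ^ k)
  rw [← two_pow_mul_inv_pow_mul_sum_choose hr]
  exact hprefactor.mul hsum

theorem monicJacobi_limit_general (c : ℝ) (hc : 1 ≤ c) (n : ℕ) (x : ℝ) :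
    Tendsto (fun p : ℝ × ℝ => monicJacobi n p.1 p.2 x)
      (𝓟 {p : ℝ × ℝ | 0 < p.1 ∧ 0 < p.2} ⊓ comap Prod.fst atTop ⊓
        comap (fun p : ℝ × ℝ => p.1 / p.2) (nhds c))
      (nhds ((x + (c - 1) / (c + 1)) ^ n)) := by
  have hc₀ : 0 < c := zero_lt_one.trans_le hc
  have hlimit : x + (c - 1) / (c + 1) = x - 1 + 2 / (1 + c⁻¹) := by
    field_simp
    ring
  rw [hlimit]
  exact tendsto_monicJacobi n x (tendsto_comap.mono_left (inf_le_left.trans inf_le_right))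
    (((tendsto_comap.mono_left inf_le_right).inv₀ hc₀.ne').congr fun p ↦ inv_div _ _)
    (by positivity)

/-- Limit of monic Jacobi polynomials as `α → ∞`, `α/β → c` with `c ≥ 1`. -/
theorem monicJacobi_limit (c : ℝ) (hc : 1 ≤ c) (n : ℕ) (x : ℝ) (hx : x ∈ Set.Icc (-1 : ℝ) 1) :
    Tendsto (fun p : ℝ × ℝ => monicJacobi n p.1 p.2 x)
      (𝓟 {p : ℝ × ℝ | 0 < p.1 ∧ 0 < p.2} ⊓ comap Prod.fst atTop ⊓
        comap (fun p : ℝ × ℝ => p.1 / p.2) (nhds c))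
      (nhds ((x + (c - 1) / (c + 1)) ^ n)) :=
  monicJacobi_limit_general c hc n x
end

section
/- Suppose φ : D₀ → ℂ is a continuous function on D₀ = {diag(e^{t₁},…,e^{t_q}) : t₁ ≥ ⋯ ≥ t_q} satisfying the product formula φ(a)φ(b) = ∫_{U(q)} φ(σ_sing(akb)) dk for all a, b ∈ D₀, where σ_sing(M) is the diagonal matrix of singular values of M in decreasing order. Then φ is uniquely determined by its restriction to D = {diag(cosh t₁,…,cosh t_q) : t₁ ≥ ⋯ ≥ t_q ≥ 0}; explicitly, φ(r·b) = φ(r·I)φ(b) for r > 0 and b ∈ D, and φ(r⁻¹·I) = 1/φ(r·I) for r ≥ 1. -/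
open MeasureTheory
open scoped ComplexOrder

noncomputable instance matrixMeasSpace' (q : ℕ) :
    MeasurableSpace (Matrix (Fin q) (Fin q) ℂ) :=
  inferInstanceAs (MeasurableSpace (Fin q → Fin q → ℂ))

/-- The singular values of a square complex matrix, in decreasing order. -/
noncomputable def singValsDec {q : ℕ} (M : Matrix (Fin q) (Fin q) ℂ) : Fin q → ℝ :=
  fun i =>
    let s : Fin q → ℝ := fun j =>
      Real.sqrt ((Matrix.posSemidef_conjTranspose_mul_self M).1.eigenvalues j)
    (s ∘ Tuple.sort s) i.rev

/-- Identification of `D₀` (decreasing positive diagonal matrices) with tuples. -/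
def A₀ (q : ℕ) : Set (Fin q → ℝ) :=
  {x | (∀ i j : Fin q, i ≤ j → x j ≤ x i) ∧ ∀ i, 0 < x i}

/-- Identification of `D = {diag(cosh t₁,…,cosh t_q) : t₁ ≥ ⋯ ≥ t_q ≥ 0}` with tuples:
decreasing tuples with entries `≥ 1`. -/
def Dset (q : ℕ) : Set (Fin q → ℝ) :=
  {x | (∀ i j : Fin q, i ≤ j → x j ≤ x i) ∧ ∀ i, 1 ≤ x i}

/-! For a scalar `r > 0`, `σ_sing(r k b) = r b` does not depend on `k ∈ U(q)`, so the product
formula with `a = r·I` has a constant integrand and gives `φ(r b) = φ(r I) φ(b)`. Taking `b` with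
`φ(b) ≠ 0` gives `φ(I) = 1`, hence `φ(r⁻¹ I) = φ(r I)⁻¹`, so `φ` on scalars is determined by its
values at `r ≥ 1`, which lie in `D`. Finally every `a ∈ D₀` is `r b` with `r` its smallest entry
and `b ∈ D`. -/

open Matrix

lemma Matrix.IsHermitian.eigenvalues_map_eq_of_eq_diagonal {n 𝕜 : Type*} [Fintype n]
    [DecidableEq n] [RCLike 𝕜] {A : Matrix n n 𝕜} (hA : A.IsHermitian) {d : n → ℝ}
    (h : A = diagonal fun i => (d i : 𝕜)) :
    Finset.univ.val.map hA.eigenvalues = Finset.univ.val.map d := by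
  have hdiag : A.charpoly.roots = Finset.univ.val.map fun i => (d i : 𝕜) := by
    rw [h, charpoly_diagonal, Polynomial.roots_prod _ _ (by simp [Finset.prod_ne_zero_iff,
      Polynomial.X_sub_C_ne_zero])]
    simp
  refine Multiset.map_injective (RCLike.ofReal_injective (K := 𝕜)) ?_
  rw [Multiset.map_map, Multiset.map_map, ← hA.roots_charpoly_eq_eigenvalues, hdiag]
  rfl

lemma Tuple.comp_sort_eq_of_map_univ_eq {n : ℕ} {α : Type*} [LinearOrder α] {f g : Fin n → α}
    (hg : Monotone g) (h : Finset.univ.val.map f = Finset.univ.val.map g) :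
    f ∘ Tuple.sort f = g := by
  rw [Fin.univ_val_map, Fin.univ_val_map, Multiset.coe_eq_coe] at h
  have hperm : (List.ofFn (f ∘ Tuple.sort f)).Perm (List.ofFn g) :=
    ((Tuple.sort f).ofFn_comp_perm f).trans h
  exact List.ofFn_injective
    (hperm.eq_of_sortedLE (Tuple.monotone_sort f).sortedLE_ofFn hg.sortedLE_ofFn)

lemma singValsDec_eq_of_conjTranspose_mul_self_eq_diagonal {q : ℕ}
    {M : Matrix (Fin q) (Fin q) ℂ} {d : Fin q → ℝ} (hd : Antitone d) (hd0 : ∀ i, 0 ≤ d i)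
    (h : Mᴴ * M = diagonal fun i => ((d i ^ 2 : ℝ) : ℂ)) :
    singValsDec M = d := by
  set hH := (posSemidef_conjTranspose_mul_self M).1
  set s : Fin q → ℝ := fun j => Real.sqrt (hH.eigenvalues j)
  have hs : Finset.univ.val.map s = Finset.univ.val.map (d ∘ Fin.revPerm) :=
    calc Finset.univ.val.map s
        = Finset.univ.val.map (Real.sqrt ∘ fun i => ((d i ^ 2 : ℝ))) := by
          rw [← Multiset.map_map, ← hH.eigenvalues_map_eq_of_eq_diagonal (d := fun i => d i ^ 2) h, Multiset.map_map]; rfl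
      _ = Finset.univ.val.map d := Multiset.map_congr rfl fun i _ => Real.sqrt_sq (hd0 i)
      _ = Finset.univ.val.map (d ∘ Fin.revPerm) := by
          rw [← Multiset.map_map, Multiset.map_univ_val_equiv]
  have hsort : s ∘ Tuple.sort s = d ∘ Fin.rev :=
    Tuple.comp_sort_eq_of_map_univ_eq (fun i j hij => hd (Fin.rev_le_rev.mpr hij)) hs
  funext i
  change (s ∘ Tuple.sort s) i.rev = d i
  rw [hsort, Function.comp_apply, Fin.rev_rev]

lemma singValsDec_unitary_mul_diagonal {q : ℕ} (k : unitaryGroup (Fin q) ℂ) {d : Fin q → ℝ}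
    (hd : Antitone d) (hd0 : ∀ i, 0 ≤ d i) :
    singValsDec ((k : Matrix (Fin q) (Fin q) ℂ) * diagonal fun i => (d i : ℂ)) = d := by
  refine singValsDec_eq_of_conjTranspose_mul_self_eq_diagonal hd hd0 ?_
  have hk : (k : Matrix (Fin q) (Fin q) ℂ)ᴴ * k = 1 := k.2.1
  rw [conjTranspose_mul, diagonal_conjTranspose, Matrix.mul_assoc, ← Matrix.mul_assoc (k : Matrix (Fin q) (Fin q) ℂ)ᴴ,
    hk, Matrix.one_mul, diagonal_mul_diagonal]
  congr 1
  funext i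
  simp [sq]

lemma singValsDec_smul_diagonal_mul_unitary_mul_diagonal {q : ℕ} {r : ℝ} (hr : 0 ≤ r)
    (k : unitaryGroup (Fin q) ℂ) {b : Fin q → ℝ} (hb : Antitone b) (hb0 : ∀ i, 0 ≤ b i) :
    singValsDec (diagonal (fun _ => (r : ℂ)) * (k : Matrix (Fin q) (Fin q) ℂ) *
      diagonal fun i => (b i : ℂ)) = r • b := by
  have hM : diagonal (fun _ => (r : ℂ)) * (k : Matrix (Fin q) (Fin q) ℂ) *
      diagonal (fun i => (b i : ℂ)) = (k : Matrix (Fin q) (Fin q) ℂ) *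
      diagonal fun i => ((r • b) i : ℂ) := by
    rw [← smul_one_eq_diagonal, Matrix.smul_mul, Matrix.one_mul, Matrix.smul_mul,
      ← Matrix.mul_smul, ← diagonal_smul]
    congr 2
    funext i
    simp
  rw [hM]
  exact singValsDec_unitary_mul_diagonal k (hb.const_mul hr) fun i => mul_nonneg hr (hb0 i)

lemma const_mem_A₀ {q : ℕ} {r : ℝ} (hr : 0 < r) : (fun _ => r) ∈ A₀ q :=
  ⟨fun _ _ _ => le_rfl, fun _ => hr⟩

lemma const_mem_Dset {q : ℕ} {r : ℝ} (hr : 1 ≤ r) : (fun _ => r) ∈ Dset q :=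
  ⟨fun _ _ _ => le_rfl, fun _ => hr⟩

lemma Dset_subset_A₀ (q : ℕ) : Dset q ⊆ A₀ q :=
  fun _ hb => ⟨hb.1, fun i => one_pos.trans_le (hb.2 i)⟩

lemma exists_eq_smul_of_mem_A₀ {q : ℕ} {a : Fin q → ℝ} (ha : a ∈ A₀ q) :
    ∃ r : ℝ, 0 < r ∧ ∃ c ∈ Dset q, a = r • c := by
  cases q with
  | zero => exact ⟨1, one_pos, a, ⟨fun i => i.elim0, fun i => i.elim0⟩, (one_smul ℝ a).symm⟩
  | succ n =>
    have hr : 0 < a (Fin.last n) := ha.2 _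
    refine ⟨a (Fin.last n), hr, (a (Fin.last n))⁻¹ • a, ⟨fun i j hij => ?_, fun i => ?_⟩, ?_⟩
    · exact mul_le_mul_of_nonneg_left (ha.1 i j hij) (inv_nonneg.mpr hr.le)
    · exact (one_le_inv_mul₀ hr).mpr (ha.1 i _ (Fin.le_last i))
    · rw [smul_smul, mul_inv_cancel₀ hr.ne', one_smul]

section ProductFormula

variable {q : ℕ} (μ : Measure (unitaryGroup (Fin q) ℂ))

def SatisfiesProductFormula (φ : (Fin q → ℝ) → ℂ) : Prop :=
  ∀ a ∈ A₀ q, ∀ b ∈ A₀ q,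
    φ a * φ b = ∫ k, φ (singValsDec
      (diagonal (fun i => (a i : ℂ)) * (k : Matrix (Fin q) (Fin q) ℂ) *
        diagonal (fun i => (b i : ℂ)))) ∂μ

namespace SatisfiesProductFormula

variable {μ} [IsProbabilityMeasure μ] {φ : (Fin q → ℝ) → ℂ} (hφ : SatisfiesProductFormula μ φ)
include hφ

lemma apply_smul {r : ℝ} (hr : 0 < r) {b : Fin q → ℝ} (hb : b ∈ A₀ q) :
    φ (r • b) = φ (fun _ => r) * φ b := by
  rw [hφ _ (const_mem_A₀ hr) b hb]
  simp only [singValsDec_smul_diagonal_mul_unitary_mul_diagonal hr.le _ hb.1 fun i => (hb.2 i).le,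
    integral_const, probReal_univ, one_smul]

lemma apply_const_mul {r s : ℝ} (hr : 0 < r) (hs : 0 < s) :
    φ (fun _ => r * s) = φ (fun _ => r) * φ (fun _ => s) :=
  hφ.apply_smul hr (const_mem_A₀ hs)

lemma apply_one (hφ0 : ∃ a ∈ A₀ q, φ a ≠ 0) : φ (fun _ => 1) = 1 := by
  obtain ⟨a, ha, ha0⟩ := hφ0
  have h := hφ.apply_smul one_pos ha
  rw [one_smul] at h
  exact (mul_eq_right₀ ha0).mp h.symm

lemma apply_inv_mul_apply (hφ0 : ∃ a ∈ A₀ q, φ a ≠ 0) {r : ℝ} (hr : 0 < r) :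
    φ (fun _ => r⁻¹) * φ (fun _ => r) = 1 := by
  rw [← hφ.apply_const_mul (inv_pos.mpr hr) hr, inv_mul_cancel₀ hr.ne', hφ.apply_one hφ0]

lemma apply_eq_inv_apply_inv (hφ0 : ∃ a ∈ A₀ q, φ a ≠ 0) {r : ℝ} (hr : 0 < r) :
    φ (fun _ => r) = (φ (fun _ => r⁻¹))⁻¹ :=
  eq_inv_of_mul_eq_one_right (hφ.apply_inv_mul_apply hφ0 hr)

lemma eq_of_eqOn_Dset (hφ0 : ∃ a ∈ A₀ q, φ a ≠ 0) {ψ : (Fin q → ℝ) → ℂ}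
    (hψ : SatisfiesProductFormula μ ψ) (hψ0 : ∃ a ∈ A₀ q, ψ a ≠ 0)
    (heq : ∀ b ∈ Dset q, ψ b = φ b) {a : Fin q → ℝ} (ha : a ∈ A₀ q) : ψ a = φ a := by
  have hconst : ∀ r > 0, ψ (fun _ => r) = φ (fun _ => r) := by
    intro r hr
    rcases le_or_gt 1 r with h1 | h1
    · exact heq _ (const_mem_Dset h1)
    · rw [hψ.apply_eq_inv_apply_inv hψ0 hr, hφ.apply_eq_inv_apply_inv hφ0 hr,
        heq _ (const_mem_Dset ((one_le_inv₀ hr).mpr h1.le))]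
  obtain ⟨r, hr, c, hc, rfl⟩ := exists_eq_smul_of_mem_A₀ ha
  rw [hψ.apply_smul hr (Dset_subset_A₀ q hc), hφ.apply_smul hr (Dset_subset_A₀ q hc),
    hconst r hr, heq c hc]

end SatisfiesProductFormula

end ProductFormula

theorem spherical_determined_by_D_general (q : ℕ)
    (μ : Measure (Matrix.unitaryGroup (Fin q) ℂ)) [IsProbabilityMeasure μ]
    (φ : (Fin q → ℝ) → ℂ)
    (hnontriv : ∃ a ∈ A₀ q, φ a ≠ 0)
    (hprod : ∀ a ∈ A₀ q, ∀ b ∈ A₀ q,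
      φ a * φ b = ∫ k, φ (singValsDec
        (Matrix.diagonal (fun i => (a i : ℂ)) * (k : Matrix (Fin q) (Fin q) ℂ) *
          Matrix.diagonal (fun i => (b i : ℂ)))) ∂μ) :
    (∀ r : ℝ, 0 < r → ∀ b ∈ Dset q, φ (r • b) = φ (fun _ => r) * φ b) ∧
    (∀ r : ℝ, 1 ≤ r → φ (fun _ => r⁻¹) * φ (fun _ => r) = 1) ∧
    (∀ φ' : (Fin q → ℝ) → ℂ, ContinuousOn φ' (A₀ q) → (∃ a ∈ A₀ q, φ' a ≠ 0) →
      (∀ a ∈ A₀ q, ∀ b ∈ A₀ q,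
        φ' a * φ' b = ∫ k, φ' (singValsDec
          (Matrix.diagonal (fun i => (a i : ℂ)) * (k : Matrix (Fin q) (Fin q) ℂ) *
            Matrix.diagonal (fun i => (b i : ℂ)))) ∂μ) →
      (∀ b ∈ Dset q, φ' b = φ b) → ∀ a ∈ A₀ q, φ' a = φ a) := by
  have hφ : SatisfiesProductFormula μ φ := hprod
  refine ⟨fun r hr b hb => hφ.apply_smul hr (Dset_subset_A₀ q hb),
    fun r hr => hφ.apply_inv_mul_apply hnontriv (one_pos.trans_le hr), ?_⟩
  intro φ' _ hφ'0 hφ' heq a ha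
  exact hφ.eq_of_eqOn_Dset hnontriv hφ' hφ'0 heq ha

/-- A continuous nontrivial solution `φ` of the product formula on `D₀` is uniquely
determined by its restriction to `D`: explicitly `φ(r·b) = φ(r·I)·φ(b)` for `r > 0`, `b ∈ D`,
and `φ(r⁻¹·I)·φ(r·I) = 1` for `r ≥ 1`; and any two such solutions agreeing on `D` agree
on all of `D₀`. -/
theorem spherical_determined_by_D (q : ℕ) (hq : 1 ≤ q)
    (μ : Measure (Matrix.unitaryGroup (Fin q) ℂ)) [IsProbabilityMeasure μ]
    (hinv : ∀ (u : Matrix.unitaryGroup (Fin q) ℂ)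
      (F : Matrix.unitaryGroup (Fin q) ℂ → ℂ), ∫ k, F (u * k) ∂μ = ∫ k, F k ∂μ)
    (φ : (Fin q → ℝ) → ℂ) (hcont : ContinuousOn φ (A₀ q))
    (hnontriv : ∃ a ∈ A₀ q, φ a ≠ 0)
    (hprod : ∀ a ∈ A₀ q, ∀ b ∈ A₀ q,
      φ a * φ b = ∫ k, φ (singValsDec
        (Matrix.diagonal (fun i => (a i : ℂ)) * (k : Matrix (Fin q) (Fin q) ℂ) *
          Matrix.diagonal (fun i => (b i : ℂ)))) ∂μ) :
    (∀ r : ℝ, 0 < r → ∀ b ∈ Dset q, φ (r • b) = φ (fun _ => r) * φ b) ∧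
    (∀ r : ℝ, 1 ≤ r → φ (fun _ => r⁻¹) * φ (fun _ => r) = 1) ∧
    (∀ φ' : (Fin q → ℝ) → ℂ, ContinuousOn φ' (A₀ q) → (∃ a ∈ A₀ q, φ' a ≠ 0) →
      (∀ a ∈ A₀ q, ∀ b ∈ A₀ q,
        φ' a * φ' b = ∫ k, φ' (singValsDec
          (Matrix.diagonal (fun i => (a i : ℂ)) * (k : Matrix (Fin q) (Fin q) ℂ) *
            Matrix.diagonal (fun i => (b i : ℂ)))) ∂μ) →
      (∀ b ∈ Dset q, φ' b = φ b) → ∀ a ∈ A₀ q, φ' a = φ a) :=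
  spherical_determined_by_D_general q μ φ hnontriv hprod
end
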